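/- Let T ≥ 2 be an integer, let R₁, …, R_T be nonnegative real numbers, and let C₁ ≥ C₂ ≥ … ≥ C_T > 0. Let M = max_{t=1,…,T} (R_t/C_t). Then R_T/C_T + Σ_{t=1}^{T-1} (R_t − R_{t+1})/C_t ≤ M·(T − Σ_{t=2}^{T} C_t/C_{t-1}). -/

import Mathlib

/-!
Passing from `T` to `T + 1` receivers adds `R_{T+1}/C_{T+1} − R_{T+1}/C_T = (R_{T+1}/C_{T+1})(1 − C_{T+1}/C_T)`
to the left-hand side and `M(1 − C_{T+1}/C_T)` to the right-hand side; since `C` is nonincreasing the factor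
`1 − C_{T+1}/C_T` is nonnegative and `R_{T+1}/C_{T+1} ≤ M`, so the inequality follows by induction on `T`.
-/

open Finset

lemma div_sub_div_le_mul_one_sub_div {r c c' M : ℝ} (hc' : 0 < c') (hle : c' ≤ c)
    (hM : r / c' ≤ M) : r / c' - r / c ≤ M * (1 - c' / c) := by
  have hc : 0 < c := hc'.trans_le hle
  have hfactor : r / c' - r / c = r / c' * (1 - c' / c) := by field_simp
  rw [hfactor]
  exact mul_le_mul_of_nonneg_right hM (sub_nonneg.mpr ((div_le_one hc).mpr hle))

theorem add_sum_sub_div_le_mul_sub_sum_div (n : ℕ) (R C : ℕ → ℝ) (M : ℝ)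
    (hCpos : ∀ t ∈ Icc 1 (n + 1), 0 < C t)
    (hCmono : ∀ t ∈ Icc 1 n, C (t + 1) ≤ C t)
    (hM : ∀ t ∈ Icc 1 (n + 1), R t / C t ≤ M) :
    R (n + 1) / C (n + 1) + ∑ t ∈ Icc 1 n, (R t - R (t + 1)) / C t
      ≤ M * ((n + 1 : ℝ) - ∑ t ∈ Icc 1 n, C (t + 1) / C t) := by
  induction n with
  | zero => simpa using hM 1 (by simp)
  | succ n ih =>
    have hsub : Icc 1 (n + 1) ⊆ Icc 1 (n + 1 + 1) := Icc_subset_Icc_right (by omega)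
    have ih := ih (fun t ht => hCpos t (hsub ht))
      (fun t ht => hCmono t (Icc_subset_Icc_right (by omega) ht)) (fun t ht => hM t (hsub ht))
    have hstep := div_sub_div_le_mul_one_sub_div (r := R (n + 2)) (M := M)
      (hCpos (n + 2) (by simp)) (hCmono (n + 1) (by simp)) (hM (n + 2) (by simp))
    rw [sum_Icc_succ_top (by omega), sum_Icc_succ_top (by omega)]
    push_cast
    linear_combination ih + hstep

/-- Capacity-ratio form of Theorem 3: with `R` nonnegative, `C` positive and
nonincreasing, and `M = max_t R_t/C_t`, the separation scheme's channel-use count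
is at most `M·(T − Σ_{t=2}^{T} C_t/C_{t-1})`. -/
theorem stmt_8 (T : ℕ) (hT : 2 ≤ T) (R C : ℕ → ℝ) (M : ℝ)
    (hCpos : ∀ t ∈ Finset.Icc 1 T, 0 < C t)
    (hCmono : ∀ t ∈ Finset.Icc 1 (T - 1), C (t + 1) ≤ C t)
    (hM : M = (Finset.Icc 1 T).sup' (Finset.nonempty_Icc.mpr (by omega))
      (fun t => R t / C t)) :
    R T / C T + ∑ t ∈ Finset.Icc 1 (T - 1), (R t - R (t + 1)) / C t
      ≤ M * ((T : ℝ) - ∑ t ∈ Finset.Icc 2 T, C t / C (t - 1)) := by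
  obtain ⟨n, rfl⟩ : ∃ n, T = n + 1 := ⟨T - 1, by omega⟩
  have hMle : ∀ t ∈ Icc 1 (n + 1), R t / C t ≤ M :=
    fun t ht => hM ▸ le_sup' (fun t => R t / C t) ht
  have hshift : Icc 2 (n + 1) = (Icc 1 n).map (addRightEmbedding 1) :=
    (map_add_right_Icc 1 n 1).symm
  rw [Nat.add_sub_cancel] at hCmono ⊢
  rw [hshift, sum_map]
  push_cast
  simpa only [addRightEmbedding_apply, Nat.add_sub_cancel] using
    add_sum_sub_div_le_mul_sub_sum_div n R C M hCpos hCmono hMle
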